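/- arXiv:1904.01841 — 7 statements merged into one kernel-verified Lean document; each statement's English description precedes it below -/
import Mathlib

section
/- The function f(x) = N·√(p·x² + (1−p)) / (p·x + (1−p) + (N−1)·√(p·x² + (1−p))) is strictly increasing for x > 1, whenever 0 < p < 1 and N ≥ 2. -/
/-!
Dividing numerator and denominator by `√(p x² + 1 - p)` gives `f = N / (g + N - 1)` with
`g x = (p x + 1 - p) / √(p x² + 1 - p)`, the ratio of the mean to the root mean square of the
law taking the value `x` with probability `p` and `1` otherwise. So it suffices that `g` is strictly
decreasing on `[1, ∞)`. Comparing squares, `g b < g a` for `1 ≤ a < b` follows from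
`(p a + 1 - p)² (p b² + 1 - p) - (p b + 1 - p)² (p a² + 1 - p) = p (1 - p) (b - a) (a + b - 2 + 2 p (a - 1) (b - 1))`.
-/

open Real

noncomputable def meanDivRms (p x : ℝ) : ℝ := (p * x + (1 - p)) / √(p * x ^ 2 + (1 - p))

section

variable {p : ℝ}

lemma meanSq_pos (hp0 : 0 ≤ p) (hp1 : p < 1) (x : ℝ) : 0 < p * x ^ 2 + (1 - p) := by
  nlinarith [sq_nonneg x]

lemma meanDivRms_pos (hp0 : 0 ≤ p) (hp1 : p < 1) {x : ℝ} (hx : 0 ≤ x) : 0 < meanDivRms p x :=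
  div_pos (by nlinarith) (sqrt_pos.2 (meanSq_pos hp0 hp1 x))

lemma sq_mean_mul_meanSq_lt (hp0 : 0 < p) (hp1 : p < 1) {a b : ℝ} (ha : 1 ≤ a) (hab : a < b) :
    (p * b + (1 - p)) ^ 2 * (p * a ^ 2 + (1 - p)) < (p * a + (1 - p)) ^ 2 * (p * b ^ 2 + (1 - p)) := by
  have hfactor : 0 < a + b - 2 + 2 * p * (a - 1) * (b - 1) := by
    have := mul_nonneg (mul_nonneg hp0.le (sub_nonneg.2 ha)) (sub_nonneg.2 (ha.trans hab.le))
    linarith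
  have key : 0 < p * (1 - p) * (b - a) * (a + b - 2 + 2 * p * (a - 1) * (b - 1)) :=
    mul_pos (mul_pos (mul_pos hp0 (sub_pos.2 hp1)) (sub_pos.2 hab)) hfactor
  linarith [show (p * a + (1 - p)) ^ 2 * (p * b ^ 2 + (1 - p))
      - (p * b + (1 - p)) ^ 2 * (p * a ^ 2 + (1 - p))
      = p * (1 - p) * (b - a) * (a + b - 2 + 2 * p * (a - 1) * (b - 1)) by ring]

lemma sq_meanDivRms (hp0 : 0 ≤ p) (hp1 : p < 1) (x : ℝ) :
    meanDivRms p x ^ 2 = (p * x + (1 - p)) ^ 2 / (p * x ^ 2 + (1 - p)) := by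
  rw [meanDivRms, div_pow, sq_sqrt (meanSq_pos hp0 hp1 x).le]

lemma meanDivRms_strictAntiOn (hp0 : 0 < p) (hp1 : p < 1) :
    StrictAntiOn (meanDivRms p) (Set.Ici 1) := by
  intro a (ha : 1 ≤ a) b _ hab
  rw [← pow_lt_pow_iff_left₀ (meanDivRms_pos hp0.le hp1 (by linarith)).le
    (meanDivRms_pos hp0.le hp1 (by linarith)).le two_ne_zero,
    sq_meanDivRms hp0.le hp1, sq_meanDivRms hp0.le hp1,
    div_lt_div_iff₀ (meanSq_pos hp0.le hp1 b) (meanSq_pos hp0.le hp1 a)]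
  exact sq_mean_mul_meanSq_lt hp0 hp1 ha hab

lemma mul_sqrt_div_eq_div_meanDivRms_add (hp0 : 0 ≤ p) (hp1 : p < 1) (c d x : ℝ) :
    c * √(p * x ^ 2 + (1 - p)) / (p * x + (1 - p) + d * √(p * x ^ 2 + (1 - p)))
      = c / (meanDivRms p x + d) := by
  have hs : 0 < √(p * x ^ 2 + (1 - p)) := sqrt_pos.2 (meanSq_pos hp0 hp1 x)
  rw [meanDivRms, div_add' _ _ _ hs.ne', div_div_eq_mul_div]

end

theorem stmt_3 (N : ℕ) (hN : 2 ≤ N) (p : ℝ) (hp0 : 0 < p) (hp1 : p < 1) :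
    StrictMonoOn (fun x : ℝ =>
      (N : ℝ) * Real.sqrt (p * x ^ 2 + (1 - p)) /
        (p * x + (1 - p) + ((N : ℝ) - 1) * Real.sqrt (p * x ^ 2 + (1 - p))))
      (Set.Ioi 1) := by
  intro a (ha : 1 < a) b (hb : 1 < b) hab
  have hN1 : (0 : ℝ) ≤ N - 1 := by
    rw [sub_nonneg, Nat.one_le_cast]
    omega
  have hgb : 0 < meanDivRms p b := meanDivRms_pos hp0.le hp1 (by linarith)
  have hgab : meanDivRms p b < meanDivRms p a := meanDivRms_strictAntiOn hp0 hp1 ha.le hb.le hab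
  simp only [mul_sqrt_div_eq_div_meanDivRms_add hp0.le hp1]
  exact div_lt_div_of_pos_left (by linarith) (by linarith) (by linarith)
end

section
/- For the two-platform game with costs c₁, c₂ > 0 and bandwidth μ > 0, the best-response equations λ₁ = √((1 + λ₂/μ)/c₁) and λ₂ = √((1 + λ₁/μ)/c₂) have a unique solution with λ₁ > 0 and λ₂ > 0. -/
/-!
Squaring the best responses turns the system into `μ c₁ λ₁² = μ + λ₂`, `μ c₂ λ₂² = μ + λ₁`.
Existence: each best response `x ↦ √(α + β x)` is monotone and satisfies `√(α + β B) ≤ B` once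
`B ≥ max 1 (α + β)`, so the continuous composite `λ₁ ↦ BR₁ (BR₂ λ₁)` maps `[0, B]` into itself
and has a fixed point there.
Uniqueness: subtracting the squared equations of two solutions `a`, `b` gives
`(a₁ - b₁) (μ² c₁ c₂ (a₁ + b₁) (a₂ + b₂) - 1) = 0`, and the second factor is positive because
every solution satisfies `μ² c₁ c₂ a₁ a₂ > 1`.
-/

noncomputable def bestResponse (c μ x : ℝ) : ℝ := √((1 + x / μ) / c)

section BestResponse

variable {c μ : ℝ}

theorem continuous_bestResponse : Continuous (bestResponse c μ) := by
  unfold bestResponse; fun_prop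

theorem bestResponse_nonneg (x : ℝ) : 0 ≤ bestResponse c μ x := Real.sqrt_nonneg _

theorem bestResponse_pos (hc : 0 < c) (hμ : 0 < μ) {x : ℝ} (hx : 0 ≤ x) :
    0 < bestResponse c μ x :=
  Real.sqrt_pos.mpr (by positivity)

theorem bestResponse_monotone (hc : 0 < c) (hμ : 0 < μ) : Monotone (bestResponse c μ) :=
  fun _ _ hxy => Real.sqrt_le_sqrt (by gcongr)

theorem bestResponse_le_self (hc : 0 < c) (hμ : 0 < μ) {B : ℝ} (hB₁ : 1 ≤ B)
    (hB : 1 / c + 1 / (c * μ) ≤ B) : bestResponse c μ B ≤ B := by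
  refine Real.sqrt_le_iff.mpr ⟨by linarith, ?_⟩
  calc (1 + B / μ) / c = 1 / c + 1 / (c * μ) * B := by field_simp
    _ ≤ (1 / c + 1 / (c * μ)) * B := by nlinarith [show 0 < 1 / c by positivity]
    _ ≤ B ^ 2 := by nlinarith

theorem mul_sq_bestResponse (hc : 0 < c) (hμ : 0 < μ) {x : ℝ} (hx : 0 ≤ x) :
    μ * c * bestResponse c μ x ^ 2 = μ + x := by
  rw [bestResponse, Real.sq_sqrt (by positivity)]
  field_simp

end BestResponse

section SquaredSystem

variable {c₁ c₂ μ a₁ a₂ b₁ b₂ : ℝ}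

theorem one_lt_of_mul_sq_eq (hμ : 0 < μ) (ha₁ : 0 < a₁) (ha₂ : 0 < a₂)
    (h₁ : μ * c₁ * a₁ ^ 2 = μ + a₂) (h₂ : μ * c₂ * a₂ ^ 2 = μ + a₁) :
    1 < μ ^ 2 * c₁ * c₂ * a₁ * a₂ := by
  have hprod : a₂ * a₁ < (μ * c₁ * a₁ ^ 2) * (μ * c₂ * a₂ ^ 2) := by
    rw [h₁, h₂]; nlinarith
  have hpos : 0 < a₁ * a₂ := mul_pos ha₁ ha₂
  nlinarith

theorem eq_of_mul_sq_eq (hμ : 0 < μ) (ha₁ : 0 < a₁) (ha₂ : 0 < a₂) (hb₁ : 0 < b₁)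
    (hb₂ : 0 < b₂) (ha₁' : μ * c₁ * a₁ ^ 2 = μ + a₂) (ha₂' : μ * c₂ * a₂ ^ 2 = μ + a₁)
    (hb₁' : μ * c₁ * b₁ ^ 2 = μ + b₂) (hb₂' : μ * c₂ * b₂ ^ 2 = μ + b₁) :
    a₁ = b₁ ∧ a₂ = b₂ := by
  have hdiff₁ : (a₁ - b₁) * ((a₁ + b₁) * μ * c₁) = a₂ - b₂ := by
    linear_combination ha₁' - hb₁'
  have hdiff₂ : (a₂ - b₂) * ((a₂ + b₂) * μ * c₂) = a₁ - b₁ := by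
    linear_combination ha₂' - hb₂'
  have hgain : 1 < μ ^ 2 * c₁ * c₂ * a₁ * a₂ := one_lt_of_mul_sq_eq hμ ha₁ ha₂ ha₁' ha₂'
  have hk : 0 < μ ^ 2 * c₁ * c₂ :=
    pos_of_mul_pos_left (by linarith : 0 < μ ^ 2 * c₁ * c₂ * (a₁ * a₂)) (mul_pos ha₁ ha₂).le
  have hfactor : 1 < μ ^ 2 * c₁ * c₂ * ((a₁ + b₁) * (a₂ + b₂)) := by
    have : a₁ * a₂ < (a₁ + b₁) * (a₂ + b₂) := by nlinarith
    nlinarith [mul_lt_mul_of_pos_left this hk]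
  have hcycle : (a₁ - b₁) * (μ ^ 2 * c₁ * c₂ * ((a₁ + b₁) * (a₂ + b₂)) - 1) = 0 := by
    linear_combination ((a₂ + b₂) * μ * c₂) * hdiff₁ + hdiff₂
  have h₁ : a₁ = b₁ := by
    have := (mul_eq_zero.mp hcycle).resolve_right (by linarith)
    linarith
  refine ⟨h₁, ?_⟩
  rw [← sub_eq_zero, ← hdiff₁, h₁, sub_self, zero_mul]

end SquaredSystem

theorem exists_pos_isFixedPt_bestResponse_comp {c₁ c₂ μ : ℝ} (hc₁ : 0 < c₁) (hc₂ : 0 < c₂)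
    (hμ : 0 < μ) :
    ∃ x : ℝ, 0 < x ∧ Function.IsFixedPt (bestResponse c₁ μ ∘ bestResponse c₂ μ) x := by
  obtain ⟨B, hB, hB₁, hB₂⟩ : ∃ B : ℝ,
      1 ≤ B ∧ 1 / c₁ + 1 / (c₁ * μ) ≤ B ∧ 1 / c₂ + 1 / (c₂ * μ) ≤ B :=
    ⟨max 1 (max _ _), le_max_left _ _, (le_max_left _ _).trans (le_max_right _ _),
      (le_max_right _ _).trans (le_max_right _ _)⟩
  have hBR : bestResponse c₁ μ (bestResponse c₂ μ B) ≤ B :=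
    (bestResponse_monotone hc₁ hμ (bestResponse_le_self hc₂ hμ hB hB₂)).trans
      (bestResponse_le_self hc₁ hμ hB hB₁)
  obtain ⟨x, hx, hfix⟩ := exists_mem_Icc_isFixedPt
    (continuous_bestResponse.comp continuous_bestResponse).continuousOn (by linarith)
    (bestResponse_nonneg _) hBR
  exact ⟨x, hfix ▸ bestResponse_pos hc₁ hμ (bestResponse_nonneg x), hfix⟩

theorem stmt_5 (c₁ c₂ μ : ℝ) (hc₁ : 0 < c₁) (hc₂ : 0 < c₂) (hμ : 0 < μ) :
    ∃! lam : ℝ × ℝ, 0 < lam.1 ∧ 0 < lam.2 ∧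
      lam.1 = Real.sqrt ((1 + lam.2 / μ) / c₁) ∧
      lam.2 = Real.sqrt ((1 + lam.1 / μ) / c₂) := by
  obtain ⟨x, hx, hfix⟩ := exists_pos_isFixedPt_bestResponse_comp hc₁ hc₂ hμ
  replace hfix : bestResponse c₁ μ (bestResponse c₂ μ x) = x := hfix
  have hx₂ : 0 < bestResponse c₂ μ x := bestResponse_pos hc₂ hμ hx.le
  refine ⟨(x, bestResponse c₂ μ x), ⟨hx, hx₂, hfix.symm, rfl⟩, ?_⟩
  rintro ⟨b₁, b₂⟩ ⟨hb₁, hb₂, e₁, e₂⟩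
  change b₁ = bestResponse c₁ μ b₂ at e₁
  change b₂ = bestResponse c₂ μ b₁ at e₂
  obtain ⟨h₁, h₂⟩ := eq_of_mul_sq_eq hμ hb₁ hb₂ hx hx₂
    (by rw [e₁]; exact mul_sq_bestResponse hc₁ hμ hb₂.le)
    (by rw [e₂]; exact mul_sq_bestResponse hc₂ hμ hb₁.le)
    (by nth_rw 1 [← hfix]; exact mul_sq_bestResponse hc₁ hμ hx₂.le)
    (mul_sq_bestResponse hc₂ hμ hx.le)
  exact Prod.ext h₁ h₂
end

section
/- In the two-platform case, the equilibrium rates strictly exceed the socially optimal rates: if (λ₁*, λ₂*) solves λᵢ = √((1 + λⱼ/μ)/cᵢ) and (λ₁**, λ₂**) solves λᵢ = √((1 + λⱼ/μ)/(cᵢ + 1/(λⱼμ))) (for {i,j} = {1,2}), both in positive reals, then λ₁* ≥ λ₁** and λ₂* ≥ λ₂**. -/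
/-!
Clearing denominators, the Nash equilibrium `l` solves `μ cᵢ lᵢ² = μ + lⱼ`, while the extra
term `1 / (mⱼ μ)` in the social planner's denominator turns this into `μ cᵢ mᵢ² ≤ μ + mⱼ` for the
social optimum `m`. If `m` exceeded `l` in one coordinate, monotonicity of these relations would
push the other coordinate above as well; subtracting and multiplying the two relations then gives
`μ² c₁ c₂ (m₁ + l₁)(m₂ + l₂) ≤ 1`, whereas multiplying the two equilibrium equations gives
`μ² c₁ c₂ l₁ l₂ ≥ 1`.
-/

lemma lt_of_mul_sq_le_of_mul_sq_eq {a κ l₁ l₂ m₁ m₂ : ℝ} (ha : 0 < a) (hl₁ : 0 ≤ l₁)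
    (hl : a * l₁ ^ 2 = κ + l₂) (hm : a * m₁ ^ 2 ≤ κ + m₂) (h : l₁ < m₁) : l₂ < m₂ := by
  have : a * l₁ ^ 2 < a * m₁ ^ 2 := by gcongr
  linarith

theorem le_and_le_of_subsolution {a b κ l₁ l₂ m₁ m₂ : ℝ} (ha : 0 < a) (hb : 0 < b)
    (hκ : 0 ≤ κ) (hl₁ : 0 < l₁) (hl₂ : 0 < l₂)
    (hl₁eq : a * l₁ ^ 2 = κ + l₂) (hl₂eq : b * l₂ ^ 2 = κ + l₁)
    (hm₁ : a * m₁ ^ 2 ≤ κ + m₂) (hm₂ : b * m₂ ^ 2 ≤ κ + m₁) : m₁ ≤ l₁ ∧ m₂ ≤ l₂ := by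
  by_contra h
  obtain ⟨h₁, h₂⟩ : l₁ < m₁ ∧ l₂ < m₂ := by
    rcases le_or_gt m₁ l₁ with h₁ | h₁
    · have h₂ : l₂ < m₂ := lt_of_not_ge fun h₂ => h ⟨h₁, h₂⟩
      exact absurd (lt_of_mul_sq_le_of_mul_sq_eq hb hl₂.le hl₂eq hm₂ h₂) (not_lt.2 h₁)
    · exact ⟨h₁, lt_of_mul_sq_le_of_mul_sq_eq ha hl₁.le hl₁eq hm₁ h₁⟩
  have hsub : a * b * ((m₁ + l₁) * (m₂ + l₂)) * ((m₁ - l₁) * (m₂ - l₂)) ≤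
      1 * ((m₁ - l₁) * (m₂ - l₂)) := by
    have hA : a * (m₁ ^ 2 - l₁ ^ 2) ≤ m₂ - l₂ := by linarith
    have hB : b * (m₂ ^ 2 - l₂ ^ 2) ≤ m₁ - l₁ := by linarith
    have hB₀ : 0 ≤ b * (m₂ ^ 2 - l₂ ^ 2) := mul_nonneg hb.le (sub_nonneg.2 (by gcongr))
    calc a * b * ((m₁ + l₁) * (m₂ + l₂)) * ((m₁ - l₁) * (m₂ - l₂))
        = a * (m₁ ^ 2 - l₁ ^ 2) * (b * (m₂ ^ 2 - l₂ ^ 2)) := by ring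
      _ ≤ (m₂ - l₂) * (m₁ - l₁) := mul_le_mul hA hB hB₀ (by linarith)
      _ = 1 * ((m₁ - l₁) * (m₂ - l₂)) := by ring
  have hprod : a * b * ((m₁ + l₁) * (m₂ + l₂)) ≤ 1 :=
    le_of_mul_le_mul_right hsub (mul_pos (by linarith) (by linarith))
  have hsol : 1 ≤ a * b * (l₁ * l₂) := by
    have : 1 * (l₁ * l₂) ≤ a * b * (l₁ * l₂) * (l₁ * l₂) := by
      calc 1 * (l₁ * l₂) ≤ (κ + l₂) * (κ + l₁) := by nlinarith
        _ = a * b * (l₁ * l₂) * (l₁ * l₂) := by rw [← hl₁eq, ← hl₂eq]; ring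
    exact le_of_mul_le_mul_right this (mul_pos hl₁ hl₂)
  have : a * b * (l₁ * l₂) < a * b * ((m₁ + l₁) * (m₂ + l₂)) := by
    gcongr <;> linarith
  linarith

lemma mul_mul_sq_eq_add_of_eq_sqrt {c μ x y : ℝ} (hc : 0 < c) (hμ : 0 < μ) (hy : 0 ≤ y)
    (h : x = √((1 + y / μ) / c)) : μ * c * x ^ 2 = μ + y := by
  rw [h, Real.sq_sqrt (by positivity)]
  field_simp

lemma mul_mul_sq_le_add_of_eq_sqrt {c μ x y : ℝ} (hc : 0 < c) (hμ : 0 < μ) (hy : 0 ≤ y)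
    (h : x = √((1 + y / μ) / (c + 1 / (y * μ)))) : μ * c * x ^ 2 ≤ μ + y := by
  have hd : 0 < c + 1 / (y * μ) := by positivity
  have hx : x ^ 2 * (c + 1 / (y * μ)) = 1 + y / μ := by
    rw [h, Real.sq_sqrt (by positivity), div_mul_cancel₀ _ hd.ne']
  calc μ * c * x ^ 2 ≤ μ * (x ^ 2 * (c + 1 / (y * μ))) := by
        have : 0 ≤ x ^ 2 * (1 / (y * μ)) := by positivity
        nlinarith
    _ = μ + y := by rw [hx]; field_simp

theorem stmt_7_general (c₁ c₂ μ : ℝ) (hc₁ : 0 < c₁) (hc₂ : 0 < c₂) (hμ : 0 < μ)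
    (l₁ l₂ m₁ m₂ : ℝ)
    (he₁ : l₁ = Real.sqrt ((1 + l₂ / μ) / c₁))
    (he₂ : l₂ = Real.sqrt ((1 + l₁ / μ) / c₂))
    (ho₁ : m₁ = Real.sqrt ((1 + m₂ / μ) / (c₁ + 1 / (m₂ * μ))))
    (ho₂ : m₂ = Real.sqrt ((1 + m₁ / μ) / (c₂ + 1 / (m₁ * μ)))) :
    l₁ ≥ m₁ ∧ l₂ ≥ m₂ := by
  have hl₁ : 0 ≤ l₁ := he₁ ▸ Real.sqrt_nonneg _
  have hl₂ : 0 ≤ l₂ := he₂ ▸ Real.sqrt_nonneg _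
  have hm₁ : 0 ≤ m₁ := ho₁ ▸ Real.sqrt_nonneg _
  have hm₂ : 0 ≤ m₂ := ho₂ ▸ Real.sqrt_nonneg _
  exact le_and_le_of_subsolution (mul_pos hμ hc₁) (mul_pos hμ hc₂) hμ.le
    (by rw [he₁]; positivity) (by rw [he₂]; positivity)
    (mul_mul_sq_eq_add_of_eq_sqrt hc₁ hμ hl₂ he₁) (mul_mul_sq_eq_add_of_eq_sqrt hc₂ hμ hl₁ he₂)
    (mul_mul_sq_le_add_of_eq_sqrt hc₁ hμ hm₂ ho₁) (mul_mul_sq_le_add_of_eq_sqrt hc₂ hμ hm₁ ho₂)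

theorem stmt_7 (c₁ c₂ μ : ℝ) (hc₁ : 0 < c₁) (hc₂ : 0 < c₂) (hμ : 0 < μ)
    (l₁ l₂ m₁ m₂ : ℝ) (hl₁ : 0 < l₁) (hl₂ : 0 < l₂) (hm₁ : 0 < m₁) (hm₂ : 0 < m₂)
    (he₁ : l₁ = Real.sqrt ((1 + l₂ / μ) / c₁))
    (he₂ : l₂ = Real.sqrt ((1 + l₁ / μ) / c₂))
    (ho₁ : m₁ = Real.sqrt ((1 + m₂ / μ) / (c₁ + 1 / (m₂ * μ))))
    (ho₂ : m₂ = Real.sqrt ((1 + m₁ / μ) / (c₂ + 1 / (m₁ * μ)))) :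
    l₁ ≥ m₁ ∧ l₂ ≥ m₂ :=
  stmt_7_general c₁ c₂ μ hc₁ hc₂ hμ l₁ l₂ m₁ m₂ he₁ he₂ ho₁ ho₂
end

section
/- The function g(λ) = √((1 + λ/μ)/(1/(λμ) + c)), defined for λ > 0 with fixed positive constants c and μ, is strictly increasing and concave in λ. -/
/-!
The radicand is the product `(1 + λ/μ) * ((λμ)⁻¹ + c)⁻¹` of two nonnegative, strictly increasing,
concave functions of `λ > 0`. The geometric mean `√(f g)` of two such functions is again strictly
increasing, and it is concave by the two-dimensional Cauchy–Schwarz inequality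
`a √(p₁q₁) + b √(p₂q₂) ≤ √((a p₁ + b p₂)(a q₁ + b q₂))`.
-/

open Set

theorem mul_sqrt_add_mul_sqrt_le_sqrt_mul {a b p₁ p₂ q₁ q₂ : ℝ} (ha : 0 ≤ a) (hb : 0 ≤ b)
    (hp₁ : 0 ≤ p₁) (hp₂ : 0 ≤ p₂) (hq₁ : 0 ≤ q₁) (hq₂ : 0 ≤ q₂) :
    a * √(p₁ * q₁) + b * √(p₂ * q₂) ≤ √((a * p₁ + b * p₂) * (a * q₁ + b * q₂)) := by
  have hcross : 2 * (√(p₁ * q₁) * √(p₂ * q₂)) ≤ p₁ * q₂ + p₂ * q₁ := by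
    rw [← Real.sqrt_mul (by positivity), show p₁ * q₁ * (p₂ * q₂) = p₁ * q₂ * (p₂ * q₁) by ring,
      Real.sqrt_mul (by positivity)]
    nlinarith [sq_nonneg (√(p₁ * q₂) - √(p₂ * q₁)), Real.sq_sqrt (mul_nonneg hp₁ hq₂),
      Real.sq_sqrt (mul_nonneg hp₂ hq₁)]
  apply Real.le_sqrt_of_sq_le
  calc (a * √(p₁ * q₁) + b * √(p₂ * q₂)) ^ 2
      = a ^ 2 * √(p₁ * q₁) ^ 2 + a * b * (2 * (√(p₁ * q₁) * √(p₂ * q₂)))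
          + b ^ 2 * √(p₂ * q₂) ^ 2 := by ring
    _ ≤ a ^ 2 * (p₁ * q₁) + a * b * (p₁ * q₂ + p₂ * q₁) + b ^ 2 * (p₂ * q₂) := by
        rw [Real.sq_sqrt (by positivity), Real.sq_sqrt (by positivity)]
        gcongr
    _ = (a * p₁ + b * p₂) * (a * q₁ + b * q₂) := by ring

theorem ConcaveOn.sqrt_mul {E : Type*} [AddCommMonoid E] [Module ℝ E] {s : Set E} {f g : E → ℝ}
    (hf : ConcaveOn ℝ s f) (hg : ConcaveOn ℝ s g) (hf₀ : ∀ x ∈ s, 0 ≤ f x)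
    (hg₀ : ∀ x ∈ s, 0 ≤ g x) :
    ConcaveOn ℝ s fun x => √(f x * g x) := by
  refine ⟨hf.1, fun x hx y hy a b ha hb hab => ?_⟩
  have hmix : a • x + b • y ∈ s := hf.1 hx hy ha hb hab
  have hg_comb : 0 ≤ a * g x + b * g y := by
    have := hg₀ x hx
    have := hg₀ y hy
    positivity
  calc a • √(f x * g x) + b • √(f y * g y)
      ≤ √((a * f x + b * f y) * (a * g x + b * g y)) :=
        mul_sqrt_add_mul_sqrt_le_sqrt_mul ha hb (hf₀ x hx) (hf₀ y hy) (hg₀ x hx) (hg₀ y hy)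
    _ ≤ √(f (a • x + b • y) * g (a • x + b • y)) :=
        Real.sqrt_le_sqrt <| mul_le_mul (hf.2 hx hy ha hb hab) (hg.2 hx hy ha hb hab) hg_comb
          (hf₀ _ hmix)

theorem StrictMonoOn.sqrt_mul {α : Type*} [Preorder α] {s : Set α} {f g : α → ℝ}
    (hf : StrictMonoOn f s) (hg : StrictMonoOn g s) (hf₀ : ∀ x ∈ s, 0 ≤ f x)
    (hg₀ : ∀ x ∈ s, 0 ≤ g x) :
    StrictMonoOn (fun x => √(f x * g x)) s := fun x hx _ hy hxy =>
  Real.sqrt_lt_sqrt (mul_nonneg (hf₀ x hx) (hg₀ x hx))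
    (mul_lt_mul'' (hf hx hy hxy) (hg hx hy hxy) (hf₀ x hx) (hg₀ x hx))

theorem strictMonoOn_inv_inv_add {c : ℝ} (hc : 0 ≤ c) :
    StrictMonoOn (fun x : ℝ => (x⁻¹ + c)⁻¹) (Ioi 0) := by
  intro x (hx : 0 < x) y (hy : 0 < y) hxy
  have hinv : y⁻¹ < x⁻¹ := inv_strictAntiOn hx hy hxy
  exact inv_strictAntiOn (by positivity : (0 : ℝ) < y⁻¹ + c) (by positivity : (0 : ℝ) < x⁻¹ + c)
    (by linarith)

theorem concaveOn_inv_inv_add {c : ℝ} (hc : 0 ≤ c) :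
    ConcaveOn ℝ (Ioi 0) fun x : ℝ => (x⁻¹ + c)⁻¹ := by
  have hform : ∀ x : ℝ, 0 < x → (x⁻¹ + c)⁻¹ = x / (1 + c * x) := fun x hx => by field_simp
  refine ⟨convex_Ioi 0, fun x (hx : 0 < x) y (hy : 0 < y) a b ha hb hab => ?_⟩
  have hz : 0 < a * x + b * y := convex_Ioi (0 : ℝ) hx hy ha hb hab
  obtain rfl : b = 1 - a := by linarith
  simp only [smul_eq_mul]
  rw [hform x hx, hform y hy, hform _ hz, ← mul_div_assoc, ← mul_div_assoc,
    div_add_div _ _ (by positivity) (by positivity), div_le_div_iff₀ (by positivity) (by positivity)]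
  linear_combination mul_nonneg (mul_nonneg hc (mul_nonneg ha hb)) (sq_nonneg (x - y))

theorem stmt_8 (c μ : ℝ) (hc : 0 < c) (hμ : 0 < μ) :
    StrictMonoOn (fun lam : ℝ => Real.sqrt ((1 + lam / μ) / (1 / (lam * μ) + c)))
      (Set.Ioi 0) ∧
    ConcaveOn ℝ (Set.Ioi 0)
      (fun lam : ℝ => Real.sqrt ((1 + lam / μ) / (1 / (lam * μ) + c))) := by
  have hfactor : (fun lam : ℝ => √((1 + lam / μ) / (1 / (lam * μ) + c))) =
      fun lam => √((1 + lam / μ) * ((lam * μ)⁻¹ + c)⁻¹) := by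
    funext lam
    rw [div_eq_mul_inv, one_div]
  have hf₀ : ∀ lam ∈ Ioi (0 : ℝ), 0 ≤ 1 + lam / μ := fun lam (hlam : 0 < lam) => by positivity
  have hg₀ : ∀ lam ∈ Ioi (0 : ℝ), 0 ≤ ((lam * μ)⁻¹ + c)⁻¹ := fun lam (hlam : 0 < lam) => by
    positivity
  have hscale : (· * μ) ⁻¹' Ioi 0 = Ioi 0 := by rw [preimage_mul_const_Ioi₀ 0 hμ, zero_div]
  rw [hfactor]
  constructor
  · refine StrictMonoOn.sqrt_mul ?_ ?_ hf₀ hg₀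
    · exact ((strictMono_id.div_const hμ).const_add 1).strictMonoOn _
    · exact (strictMonoOn_inv_inv_add hc.le).comp ((strictMono_mul_right_of_pos hμ).strictMonoOn _)
        fun lam (hlam : 0 < lam) => mul_pos hlam hμ
  · refine ConcaveOn.sqrt_mul ?_ ?_ hf₀ hg₀
    · exact (concaveOn_const 1 (convex_Ioi 0)).add
        ((LinearMap.mulRight ℝ μ⁻¹).concaveOn (convex_Ioi 0))
    · exact hscale ▸ (concaveOn_inv_inv_add hc.le).comp_linearMap (LinearMap.mulRight ℝ μ)
end

section
/- Let f(λ) = √((1 + λ/μ)/c₂) − μ(c₁λ² − 1) for λ > 0, with fixed positive c₁, c₂, μ. Then f has exactly one positive root. -/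
/-!
The function is strictly concave on `[0, ∞)`: a square root of an affine function minus a
quadratic with positive leading coefficient. It is positive at `0`, so it has at most one positive
root, and it becomes negative because the quadratic outgrows the square root, so the
intermediate value theorem provides a root.
-/

open Set

theorem concaveOn_sqrt_mul_add {a b : ℝ} (ha : 0 ≤ a) (hb : 0 ≤ b) :
    ConcaveOn ℝ (Ici 0) fun x => √(a * x + b) := by
  let g : ℝ →ᵃ[ℝ] ℝ := ⟨fun x => a * x + b, a • LinearMap.id, fun p v => by
    simp only [vadd_eq_add, LinearMap.smul_apply, LinearMap.id_coe, id_eq, smul_eq_mul]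
    ring⟩
  refine (Real.strictConcaveOn_sqrt.concaveOn.comp_affineMap g).subset ?_ (convex_Ici 0)
  intro x (hx : 0 ≤ x)
  show 0 ≤ a * x + b
  positivity

theorem strictConvexOn_quadratic {a : ℝ} (ha : 0 < a) (b c : ℝ) :
    StrictConvexOn ℝ univ fun x => a * x ^ 2 + b * x + c := by
  refine ⟨convex_univ, fun x _ y _ hxy s t hs ht hst => ?_⟩
  obtain rfl : t = 1 - s := by linarith
  have hxy' : 0 < (x - y) ^ 2 := by positivity
  simp only [smul_eq_mul]
  nlinarith [mul_pos (mul_pos hs ht) (mul_pos ha hxy')]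

/-- Otherwise the smaller preimage lies strictly between `x₀` and the larger one, where strict
concavity forces `f > c`. -/
theorem StrictConcaveOn.eq_of_map_eq_of_le {s : Set ℝ} {f : ℝ → ℝ} (hf : StrictConcaveOn ℝ s f)
    {x₀ x y c : ℝ} (hx₀ : x₀ ∈ s) (hc : c ≤ f x₀) (hx : x ∈ s) (hy : y ∈ s)
    (hx₀x : x₀ < x) (hx₀y : x₀ < y) (hfx : f x = c) (hfy : f y = c) : x = y := by
  wlog hxy : x < y generalizing x y
  · rcases (not_lt.mp hxy).eq_or_lt with h | h
    · exact h.symm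
    · exact (this hy hx hx₀y hx₀x hfy hfx h).symm
  have hlt := hf.lt_on_openSegment hx₀ hy (hx₀x.trans hxy).ne
    (by rw [openSegment_eq_Ioo (hx₀x.trans hxy)]; exact ⟨hx₀x, hxy⟩)
  rw [hfx, hfy] at hlt
  exact absurd hlt (by simpa using hc)

noncomputable def rateEquation (c₁ c₂ μ lam : ℝ) : ℝ :=
  √((1 + lam / μ) / c₂) - μ * (c₁ * lam ^ 2 - 1)

section rateEquation

variable {c₁ c₂ μ : ℝ}

theorem continuous_rateEquation : Continuous (rateEquation c₁ c₂ μ) := by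
  unfold rateEquation
  fun_prop

theorem rateEquation_zero_pos (hμ : 0 < μ) : 0 < rateEquation c₁ c₂ μ 0 := by
  unfold rateEquation
  have := Real.sqrt_nonneg ((1 + 0 / μ) / c₂)
  nlinarith

theorem strictConcaveOn_rateEquation (hc₁ : 0 < c₁) (hc₂ : 0 < c₂) (hμ : 0 < μ) :
    StrictConcaveOn ℝ (Ici 0) (rateEquation c₁ c₂ μ) := by
  have hsqrt := concaveOn_sqrt_mul_add (a := 1 / (μ * c₂)) (b := 1 / c₂) (by positivity)
    (by positivity)
  have hquad := (strictConvexOn_quadratic (mul_pos hμ hc₁) 0 (-μ)).subset (subset_univ _)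
    (convex_Ici 0)
  refine (hsqrt.sub_strictConvexOn hquad).congr fun x _ => ?_
  rw [Pi.sub_apply, rateEquation]
  congr 1
  · congr 1
    field_simp
    ring
  · ring

theorem exists_rateEquation_nonpos (hc₁ : 0 < c₁) (hc₂ : 0 < c₂) (hμ : 0 < μ) :
    ∃ B, 0 < B ∧ rateEquation c₁ c₂ μ B ≤ 0 := by
  set K := 1 + 1 / c₂ + 1 / (μ * c₂) + μ
  set B := max 1 (K / (μ * c₁))
  have hB₁ : 1 ≤ B := le_max_left _ _
  have hBK : K ≤ μ * c₁ * B := by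
    rw [← div_le_iff₀' (by positivity)]
    exact le_max_right _ _
  have hsqrt : √((1 + B / μ) / c₂) ≤ 1 + (1 + B / μ) / c₂ := by
    rw [Real.sqrt_le_left (by positivity)]
    nlinarith
  have hlin : 1 + (1 + B / μ) / c₂ + μ ≤ K * B := by
    have hsplit : (1 + B / μ) / c₂ = 1 / c₂ + 1 / (μ * c₂) * B := by field_simp
    have : 0 ≤ 1 + 1 / c₂ + μ := by positivity
    nlinarith
  refine ⟨B, by positivity, ?_⟩
  unfold rateEquation
  nlinarith

end rateEquation

theorem stmt_10 (c₁ c₂ μ : ℝ) (hc₁ : 0 < c₁) (hc₂ : 0 < c₂) (hμ : 0 < μ) :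
    ∃! lam : ℝ, 0 < lam ∧
      Real.sqrt ((1 + lam / μ) / c₂) - μ * (c₁ * lam ^ 2 - 1) = 0 := by
  obtain ⟨B, hB, hfB⟩ := exists_rateEquation_nonpos hc₁ hc₂ hμ
  obtain ⟨lam, ⟨hlam, -⟩, hroot⟩ := intermediate_value_Ioc' hB.le
    continuous_rateEquation.continuousOn ⟨hfB, rateEquation_zero_pos hμ⟩
  refine ⟨lam, ⟨hlam, hroot⟩, fun y ⟨hy, hfy⟩ => ?_⟩
  exact (strictConcaveOn_rateEquation hc₁ hc₂ hμ).eq_of_map_eq_of_le (x₀ := 0) self_mem_Ici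
    (rateEquation_zero_pos hμ).le hy.le hlam.le hy hlam hfy hroot
end

section
/- If c₁ → 0 while c₂ > 0, μ > 0 are fixed, then the two-platform Nash equilibrium rates satisfy λ₁* → ∞ and λ₂* → ∞, and the equilibrium social cost π(λ₁*, λ₂*) → ∞; in particular the price of anarchy is unbounded: for every M > 0 there exist costs with π(λ₁*, λ₂*)/π(λ₁**, λ₂**) > M. -/
/-!
From `λ₁ = √((1 + λ₂/μ)/c₁) ≥ √(1/c₁)` the first equilibrium rate blows up as `c₁ → 0`,
and then so does `λ₂ = √((1 + λ₁/μ)/c₂)`. The social cost dominates `c₂ λ₂`, hence diverges,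
while the optimal social cost stays below its value `2 + 4/μ + c₁ + c₂` at `(1, 1)`.
-/

open Filter

/-- Social cost of the two-platform game with costs `c₁, c₂` and bandwidth `μ`. -/
noncomputable def socialCost (c₁ c₂ μ a b : ℝ) : ℝ :=
  ((a + b) / a) * (1 / (a + b) + 1 / μ) + c₁ * a +
    ((a + b) / b) * (1 / (a + b) + 1 / μ) + c₂ * b

open Topology

lemma socialCost_one_one (c₁ c₂ μ : ℝ) : socialCost c₁ c₂ μ 1 1 = 2 + 4 / μ + c₁ + c₂ := by
  unfold socialCost
  ring

section SocialCost

variable {c₁ c₂ μ a b : ℝ}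

lemma socialCost_pos (hc₁ : 0 ≤ c₁) (hc₂ : 0 ≤ c₂) (hμ : 0 ≤ μ) (ha : 0 < a) (hb : 0 < b) :
    0 < socialCost c₁ c₂ μ a b := by
  unfold socialCost
  positivity

lemma mul_le_socialCost (hc₁ : 0 ≤ c₁) (hμ : 0 ≤ μ) (ha : 0 < a) (hb : 0 < b) :
    c₂ * b ≤ socialCost c₁ c₂ μ a b := by
  unfold socialCost
  exact le_add_of_nonneg_left (by positivity)

lemma socialCost_le_of_isMinOn {m : ℝ × ℝ}
    (hmin : IsMinOn (fun q : ℝ × ℝ => socialCost c₁ c₂ μ q.1 q.2)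
      (Set.Ioi (0 : ℝ) ×ˢ Set.Ioi (0 : ℝ)) m) :
    socialCost c₁ c₂ μ m.1 m.2 ≤ 2 + 4 / μ + c₁ + c₂ :=
  socialCost_one_one c₁ c₂ μ ▸ hmin (show ((1 : ℝ), (1 : ℝ)) ∈ _ by simp)

end SocialCost

section Equilibrium

variable {μ : ℝ} {l₁ l₂ : ℝ → ℝ}

lemma tendsto_nhdsGT_zero_atTop_of_eq_sqrt (hμ : 0 ≤ μ)
    (h : ∀ c : ℝ, 0 < c → 0 ≤ l₂ c ∧ l₁ c = √((1 + l₂ c / μ) / c)) :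
    Tendsto l₁ (𝓝[>] 0) atTop := by
  refine tendsto_atTop_mono' _ ?_ (Real.tendsto_sqrt_atTop.comp tendsto_inv_nhdsGT_zero)
  filter_upwards [self_mem_nhdsWithin] with c (hc : 0 < c)
  obtain ⟨hl₂, hl₁⟩ := h c hc
  rw [hl₁, Function.comp_apply, inv_eq_one_div]
  gcongr
  exact le_add_of_nonneg_right (div_nonneg hl₂ hμ)

lemma tendsto_atTop_of_eq_sqrt {f : Filter ℝ} {c₂ : ℝ} (hc₂ : 0 < c₂) (hμ : 0 < μ)
    (hl₁ : Tendsto l₁ f atTop) (h : ∀ᶠ c in f, l₂ c = √((1 + l₁ c / μ) / c₂)) :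
    Tendsto l₂ f atTop := by
  refine (Real.tendsto_sqrt_atTop.comp ?_).congr' (h.mono fun _ hc => hc.symm)
  exact (tendsto_atTop_add_const_left _ 1 (hl₁.atTop_div_const hμ)).atTop_div_const hc₂

lemma tendsto_socialCost_atTop {c₂ : ℝ} (hc₂ : 0 < c₂) (hμ : 0 ≤ μ)
    (hpos : ∀ c : ℝ, 0 < c → 0 < l₁ c ∧ 0 < l₂ c) (hl₂ : Tendsto l₂ (𝓝[>] 0) atTop) :
    Tendsto (fun c => socialCost c c₂ μ (l₁ c) (l₂ c)) (𝓝[>] 0) atTop := by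
  refine tendsto_atTop_mono' _ ?_ (hl₂.const_mul_atTop hc₂)
  filter_upwards [self_mem_nhdsWithin] with c (hc : 0 < c)
  exact mul_le_socialCost hc.le hμ (hpos c hc).1 (hpos c hc).2

end Equilibrium

theorem stmt_17 (c₂ μ : ℝ) (hc₂ : 0 < c₂) (hμ : 0 < μ) (l₁ l₂ : ℝ → ℝ)
    (heq : ∀ c₁ : ℝ, 0 < c₁ → 0 < l₁ c₁ ∧ 0 < l₂ c₁ ∧
      l₁ c₁ = Real.sqrt ((1 + l₂ c₁ / μ) / c₁) ∧
      l₂ c₁ = Real.sqrt ((1 + l₁ c₁ / μ) / c₂)) :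
    Tendsto l₁ (nhdsWithin 0 (Set.Ioi 0)) atTop ∧
    Tendsto l₂ (nhdsWithin 0 (Set.Ioi 0)) atTop ∧
    Tendsto (fun c₁ => socialCost c₁ c₂ μ (l₁ c₁) (l₂ c₁))
      (nhdsWithin 0 (Set.Ioi 0)) atTop ∧
    ∀ M : ℝ, 0 < M → ∃ c₁ : ℝ, 0 < c₁ ∧
      ∀ m : ℝ × ℝ, m ∈ Set.Ioi (0 : ℝ) ×ˢ Set.Ioi (0 : ℝ) →
        IsMinOn (fun q : ℝ × ℝ => socialCost c₁ c₂ μ q.1 q.2)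
          (Set.Ioi (0 : ℝ) ×ˢ Set.Ioi (0 : ℝ)) m →
        socialCost c₁ c₂ μ (l₁ c₁) (l₂ c₁) / socialCost c₁ c₂ μ m.1 m.2 > M := by
  have hl₁ : Tendsto l₁ (𝓝[>] 0) atTop :=
    tendsto_nhdsGT_zero_atTop_of_eq_sqrt hμ.le fun c hc =>
      ⟨(heq c hc).2.1.le, (heq c hc).2.2.1⟩
  have hl₂ : Tendsto l₂ (𝓝[>] 0) atTop :=
    tendsto_atTop_of_eq_sqrt hc₂ hμ hl₁
      (eventually_nhdsWithin_of_forall fun c hc => (heq c hc).2.2.2)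
  have hcost := tendsto_socialCost_atTop hc₂ hμ.le (fun c hc => ⟨(heq c hc).1, (heq c hc).2.1⟩) hl₂
  refine ⟨hl₁, hl₂, hcost, fun M hM => ?_⟩
  obtain ⟨c₁, hbig, hc₁, hc₁_lt_one⟩ :=
    ((hcost.eventually_gt_atTop (M * (3 + 4 / μ + c₂))).and
      (Ioo_mem_nhdsGT one_pos)).exists
  refine ⟨c₁, hc₁, fun m ⟨hm₁, hm₂⟩ hmin => ?_⟩
  have hopt_pos := socialCost_pos hc₁.le hc₂.le hμ.le hm₁ hm₂
  have hopt_le : socialCost c₁ c₂ μ m.1 m.2 ≤ 3 + 4 / μ + c₂ := by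
    linarith [socialCost_le_of_isMinOn hmin, hc₁_lt_one]
  rw [gt_iff_lt, lt_div_iff₀ hopt_pos]
  exact (mul_le_mul_of_nonneg_left hopt_le hM.le).trans_lt hbig
end

section
/- Fix A > 0 and 0 < c₁ < c₂. The no-deviation discount threshold δ(c) = (√(A/(c+k)) − √(A/c))² / (2√(A/(c+k))·(λ* − √(A/c))) is decreasing in c when k > 0 and λ* are held fixed with λ* > √(A/c₁); hence the cheapest platform has the largest deviation threshold: δ(c₁) ≥ δ(c₂). -/
/-!
Write `s c = √(A / c)` and `t c = √(A / (c + k))`. Since `s c / t c = √(1 + k / c)`,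
the threshold factors as `t c · (√(1 + k / c) - 1)² / (2 (λ* - s c))`. Each of `t`,
`√(1 + k / c) - 1` and `1 / (λ* - s c)` is nonnegative and antitone for `c ≥ c₁`,
hence so is their product.
-/

open Real

noncomputable def deviationThreshold (A k lam c : ℝ) : ℝ :=
  (√(A / (c + k)) - √(A / c)) ^ 2 / (2 * √(A / (c + k)) * (lam - √(A / c)))

lemma sqrt_div_le_sqrt_div {A a b : ℝ} (hA : 0 ≤ A) (ha : 0 < a) (hab : a ≤ b) :
    √(A / b) ≤ √(A / a) :=
  sqrt_le_sqrt (div_le_div_of_nonneg_left hA ha hab)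

lemma sqrt_div_eq_sqrt_div_add_mul_sqrt {A c k : ℝ} (hA : 0 ≤ A) (hc : 0 < c)
    (hck : 0 < c + k) : √(A / c) = √(A / (c + k)) * √(1 + k / c) := by
  rw [← sqrt_mul (by positivity)]
  congr 1
  field_simp

lemma deviationThreshold_eq {A k lam c : ℝ} (hA : 0 < A) (hk : 0 ≤ k) (hc : 0 < c) :
    deviationThreshold A k lam c =
      √(A / (c + k)) * (√(1 + k / c) - 1) ^ 2 / (2 * (lam - √(A / c))) := by
  have ht : √(A / (c + k)) ≠ 0 := (sqrt_pos.mpr (by positivity)).ne'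
  rw [deviationThreshold, sqrt_div_eq_sqrt_div_add_mul_sqrt (k := k) hA.le hc (by positivity)]
  set t := √(A / (c + k))
  set u := √(1 + k / c)
  calc (t - t * u) ^ 2 / (2 * t * (lam - t * u))
      = t * (t * (u - 1) ^ 2) / (t * (2 * (lam - t * u))) := by ring
    _ = t * (u - 1) ^ 2 / (2 * (lam - t * u)) := mul_div_mul_left _ _ ht

theorem deviationThreshold_antitoneOn {A k lam c₁ : ℝ} (hA : 0 < A) (hk : 0 ≤ k)
    (hc₁ : 0 < c₁) (hlam : √(A / c₁) < lam) :
    AntitoneOn (deviationThreshold A k lam) (Set.Ici c₁) := by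
  intro a ha b hb hab
  have ha₀ : 0 < a := hc₁.trans_le ha
  have hb₀ : 0 < b := hc₁.trans_le hb
  have hsa : √(A / a) < lam := (sqrt_div_le_sqrt_div hA.le hc₁ ha).trans_lt hlam
  have hub : 0 ≤ √(1 + k / b) - 1 :=
    sub_nonneg.mpr (one_le_sqrt.mpr (le_add_of_nonneg_right (by positivity)))
  rw [deviationThreshold_eq hA hk ha₀, deviationThreshold_eq hA hk hb₀]
  gcongr

theorem stmt_19 (A k lamS c₁ c₂ : ℝ) (hA : 0 < A) (hk : 0 < k)
    (hc₁ : 0 < c₁) (hc₂ : c₁ < c₂) (hlamS : lamS > Real.sqrt (A / c₁)) :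
    AntitoneOn (fun c : ℝ =>
        (Real.sqrt (A / (c + k)) - Real.sqrt (A / c)) ^ 2 /
          (2 * Real.sqrt (A / (c + k)) * (lamS - Real.sqrt (A / c))))
      (Set.Ici c₁) ∧
    (Real.sqrt (A / (c₂ + k)) - Real.sqrt (A / c₂)) ^ 2 /
        (2 * Real.sqrt (A / (c₂ + k)) * (lamS - Real.sqrt (A / c₂)))
      ≤ (Real.sqrt (A / (c₁ + k)) - Real.sqrt (A / c₁)) ^ 2 /
        (2 * Real.sqrt (A / (c₁ + k)) * (lamS - Real.sqrt (A / c₁))) := by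
  have h := deviationThreshold_antitoneOn hA hk.le hc₁ hlamS
  exact ⟨h, h Set.self_mem_Ici hc₂.le hc₂.le⟩
end
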